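/- Let G be a compact Hausdorff topological group. Then for every closed subgroup P of Aut(G) (with the compact-open topology), the topological semidirect product G ⋊ P is a minimal topological group. -/

import Mathlib

open scoped Topology

/-- The group of self-homeomorphisms of `X`, with composition as multiplication:
`(f * g) x = f (g x)`, identity `Homeomorph.refl` and inverse `Homeomorph.symm`. -/
instance homeoGroup (X : Type*) [TopologicalSpace X] : Group (X ≃ₜ X) where
  mul f g := g.trans f
  one := Homeomorph.refl X
  inv := Homeomorph.symm
  mul_assoc f g h := rfl
  one_mul f := rfl
  mul_one f := rfl
  inv_mul_cancel f := by ext x; exact f.symm_apply_apply x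

/-- The compact-open topology on the homeomorphism group `H(X)`, induced from the
compact-open topology on `C(X, X)`. -/
def coTop (X : Type*) [TopologicalSpace X] : TopologicalSpace (X ≃ₜ X) :=
  TopologicalSpace.induced (fun f : X ≃ₜ X => (f : C(X, X))) ContinuousMap.compactOpen

/-- The group `Aut(G)` of all topological group automorphisms of a topological group `G`
(group automorphisms that are homeomorphisms), as a subgroup of the homeomorphism
group of `G`. -/
def topAut (G : Type*) [Group G] [TopologicalSpace G] : Subgroup (G ≃ₜ G) where
  carrier := {f : G ≃ₜ G | ∀ a b : G, f (a * b) = f a * f b}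
  one_mem' := fun _ _ => rfl
  mul_mem' := by
    intro f g hf hg a b
    show f (g (a * b)) = f (g a) * f (g b)
    rw [hg, hf]
  inv_mem' := by
    intro f hf a b
    show f.symm (a * b) = f.symm a * f.symm b
    apply f.injective
    rw [hf]
    simp

/-- The compact-open topology on `Aut(G)`. -/
def autTop (G : Type*) [Group G] [TopologicalSpace G] : TopologicalSpace ↥(topAut G) :=
  TopologicalSpace.induced (Subtype.val : ↥(topAut G) → G ≃ₜ G) (coTop G)

/-- The tautological action of a subgroup `P ≤ Aut(G)` on `G`, as a homomorphism
`P →* MulAut G`. -/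
def actHom {G : Type*} [Group G] [TopologicalSpace G] (P : Subgroup ↥(topAut G)) :
    ↥P →* MulAut G where
  toFun p := MulEquiv.mk' p.1.1.toEquiv (fun a b => p.1.2 a b)
  map_one' := rfl
  map_mul' _ _ := rfl

/-- The topology on a subgroup `P ≤ Aut(G)`, inherited from the compact-open topology. -/
def subAutTop {G : Type*} [Group G] [TopologicalSpace G] (P : Subgroup ↥(topAut G)) :
    TopologicalSpace ↥P :=
  TopologicalSpace.induced (Subtype.val : ↥P → ↥(topAut G)) (autTop G)

/-- The product topology on the topological semidirect product `G ⋊ P`, whose underlying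
group is `SemidirectProduct G ↥P (actHom P)`, i.e. the multiplication is
`(g₁, p₁) * (g₂, p₂) = (g₁ * p₁ g₂, p₁ * p₂)`. -/
def sdpTop {G : Type*} [Group G] [TopologicalSpace G] (P : Subgroup ↥(topAut G)) :
    TopologicalSpace (G ⋊[actHom P] ↥P) :=
  TopologicalSpace.induced (fun x : G ⋊[actHom P] ↥P => (x.left, x.right))
    (@instTopologicalSpaceProd G ↥P _ (subAutTop P))

/-- A (Hausdorff) topological group `(G, τ)` is *minimal* if every Hausdorff group topology
on `G` coarser than `τ` equals `τ`. -/
def IsMinimalTopGroup (G : Type*) [Group G] (τ : TopologicalSpace G) : Prop :=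
  ∀ σ : TopologicalSpace G, τ ≤ σ → @IsTopologicalGroup G σ _ → @T2Space G σ → σ = τ

/-!
Let `σ` be a Hausdorff group topology on `G ⋊ P` coarser than the product topology. As `G` is
compact, `inl` is a closed embedding for `σ`, so conjugation `x ↦ conj (x.left) ∘ x.right` is a
`σ`-continuous map into `Aut(G)`. Since `P` is closed, so is the preimage `S` of `P` under it,
and `inr P = {x ∈ S | x = inr (conj x)}` is `σ`-closed. The graph of `x ↦ x.left` is then closed,
so by compactness of `G` this projection is `σ`-continuous, and so is
`x ↦ x.right = conj ((inl x.left)⁻¹ * x)`. Thus `σ` is finer than the product topology.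
-/

open Topology Set SemidirectProduct

attribute [local instance] autTop

theorem continuous_of_isClosed_graph_of_compactSpace {X K : Type*} [TopologicalSpace X]
    [TopologicalSpace K] [CompactSpace K] {f : X → K}
    (hf : IsClosed {q : X × K | f q.1 = q.2}) : Continuous f := by
  refine continuous_iff_isClosed.2 fun C hC => ?_
  have hpre : f ⁻¹' C = Prod.fst '' ({q : X × K | f q.1 = q.2} ∩ Prod.snd ⁻¹' C) := by
    ext x
    simp
  rw [hpre]
  exact isClosedMap_fst_of_compactSpace _ (hf.inter (hC.preimage continuous_snd))

theorem SemidirectProduct.inl_left_inv_mul {N H : Type*} [Group N] [Group H] {φ : H →* MulAut N}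
    (x : N ⋊[φ] H) : (inl x.left)⁻¹ * x = inr x.right :=
  inv_mul_eq_of_eq_mul (inl_left_mul_inr_right x).symm

section

variable {G : Type*} [Group G] [TopologicalSpace G]

theorem isInducing_toContinuousMap_topAut :
    IsInducing fun f : topAut G => (f.1 : C(G, G)) :=
  ⟨induced_compose⟩

@[simp]
theorem actHom_apply {P : Subgroup (topAut G)} (p : P) (g : G) : actHom P p g = p.1.1 g := rfl

variable [IsTopologicalGroup G]

def conjAut (g : G) : topAut G :=
  ⟨(Homeomorph.mulLeft g).trans (Homeomorph.mulRight g⁻¹), fun a b => by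
    simp only [Homeomorph.trans_apply, Homeomorph.coe_mulLeft, Homeomorph.coe_mulRight]
    group⟩

@[simp]
theorem conjAut_apply (g x : G) : (conjAut g).1 x = g * x * g⁻¹ := rfl

@[simp]
theorem conjAut_one : conjAut (1 : G) = 1 := by
  ext x
  simp

variable {P : Subgroup (topAut G)}

def conjAction (x : G ⋊[actHom P] P) : topAut G := conjAut x.left * x.right

theorem inl_conjAction_apply (x : G ⋊[actHom P] P) (g : G) :
    (inl ((conjAction x).1 g) : G ⋊[actHom P] P) = x * inl g * x⁻¹ := by
  conv_rhs => rw [← inl_left_mul_inr_right x]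
  rw [conjAction, Subgroup.coe_mul, Homeomorph.mul_apply]
  simp only [conjAut_apply, map_mul, map_inv, ← actHom_apply, inl_aut]
  group

@[simp]
theorem conjAction_inr (p : P) : conjAction (inr p : G ⋊[actHom P] P) = p := by
  simp [conjAction]

variable [TopologicalSpace (G ⋊[actHom P] P)] [IsTopologicalGroup (G ⋊[actHom P] P)]
  [T2Space (G ⋊[actHom P] P)] [CompactSpace G]

theorem continuous_conjAction (hinl : Continuous (inl : G → G ⋊[actHom P] P)) :
    Continuous (conjAction : G ⋊[actHom P] P → topAut G) := by
  have hemb : IsEmbedding (inl : G → G ⋊[actHom P] P) :=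
    (hinl.isClosedEmbedding inl_injective).isEmbedding
  have hF : Continuous fun q : (G ⋊[actHom P] P) × G => (conjAction q.1).1 q.2 := by
    simp only [hemb.continuous_iff, Function.comp_def, inl_conjAction_apply]
    fun_prop
  exact isInducing_toContinuousMap_topAut.continuous_iff.2 (ContinuousMap.curry ⟨_, hF⟩).continuous

theorem isClosed_range_inr_of_isClosed (hinl : Continuous (inl : G → G ⋊[actHom P] P))
    (hinr : Continuous (inr : P → G ⋊[actHom P] P)) (hP : IsClosed (P : Set (topAut G))) :
    IsClosed (range (inr : P → G ⋊[actHom P] P)) := by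
  set S := conjAction ⁻¹' (P : Set (topAut G))
  have hS : IsClosed S := hP.preimage (continuous_conjAction hinl)
  let r : S → P := fun x => ⟨conjAction x.1, x.2⟩
  have hr : Continuous r := ((continuous_conjAction hinl).comp continuous_subtype_val).subtype_mk _
  have hrange : range (inr : P → G ⋊[actHom P] P) = Subtype.val '' {x : S | inr (r x) = x.1} := by
    ext x
    constructor
    · rintro ⟨p, rfl⟩
      exact ⟨⟨inr p, by simp [S]⟩, by simp [r], rfl⟩
    · rintro ⟨x, hx, rfl⟩
      exact ⟨r x, hx⟩
  rw [hrange]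
  exact hS.isClosedEmbedding_subtypeVal.isClosedMap _
    (isClosed_eq (hinr.comp hr) continuous_subtype_val)

theorem continuous_left_of_isClosed (hinl : Continuous (inl : G → G ⋊[actHom P] P))
    (hinr : Continuous (inr : P → G ⋊[actHom P] P)) (hP : IsClosed (P : Set (topAut G))) :
    Continuous fun x : G ⋊[actHom P] P => x.left := by
  refine continuous_of_isClosed_graph_of_compactSpace ?_
  have hgraph : {q : (G ⋊[actHom P] P) × G | q.1.left = q.2} =
      (fun q => (inl q.2)⁻¹ * q.1) ⁻¹' range inr := by
    ext ⟨x, g⟩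
    constructor
    · rintro (rfl : x.left = g)
      exact ⟨x.right, (inl_left_inv_mul x).symm⟩
    · rintro ⟨p, hp⟩
      simpa using congrArg SemidirectProduct.left (eq_inv_mul_iff_mul_eq.1 hp).symm
  rw [hgraph]
  exact (isClosed_range_inr_of_isClosed hinl hinr hP).preimage (by fun_prop)

theorem continuous_right_of_isClosed (hinl : Continuous (inl : G → G ⋊[actHom P] P))
    (hinr : Continuous (inr : P → G ⋊[actHom P] P)) (hP : IsClosed (P : Set (topAut G))) :
    Continuous fun x : G ⋊[actHom P] P => x.right := by
  have hright (x : G ⋊[actHom P] P) :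
      (x.right : topAut G) = conjAction ((inl x.left)⁻¹ * x) := by
    rw [inl_left_inv_mul, conjAction_inr]
  refine continuous_induced_rng.2 ?_
  simp only [Function.comp_def, hright]
  exact (continuous_conjAction hinl).comp
    ((hinl.comp (continuous_left_of_isClosed hinl hinr hP)).inv.mul continuous_id)

end

theorem semidirectProduct_minimal_of_isClosed (G : Type*)
    [Group G] [TopologicalSpace G] [IsTopologicalGroup G] [CompactSpace G]
    (P : Subgroup ↥(topAut G))
    (hPclosed : IsClosed[autTop G] (P : Set ↥(topAut G))) :
    IsMinimalTopGroup (G ⋊[actHom P] ↥P) (sdpTop P) := by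
  intro σ hle _ _
  have hinl : Continuous[_, sdpTop P] (inl : G → G ⋊[actHom P] P) :=
    continuous_induced_rng.2 (continuous_id.prodMk continuous_const)
  have hinr : Continuous[subAutTop P, sdpTop P] (inr : P → G ⋊[actHom P] P) :=
    continuous_induced_rng.2 (continuous_const.prodMk continuous_id)
  replace hinl := continuous_le_rng hle hinl
  replace hinr := continuous_le_rng hle hinr
  refine le_antisymm (continuous_id_iff_le.1 (continuous_induced_rng.2 ?_)) hle
  exact (continuous_left_of_isClosed hinl hinr hPclosed).prodMk
    (continuous_right_of_isClosed hinl hinr hPclosed)
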